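/- The isomorphism S : G/(id−γ_*)(G) → G_0 maps the image of G^{++} onto G_F^+ = {f ∈ G_0 : f > 0 on F} ∪ {0}. -/

import Mathlib

/-!
`G₀` is a subring of the functions on `(0,1)` containing `α = t/(1-t)` and `α⁻¹ = (1-t)/t`,
so `Σₙ αⁿ xₙ` of a finitely supported sequence in `G₀` lies in `G₀`, and positivity on `F` is
the same condition on both sides. Conversely each `f ∈ G_F⁺` is the image of the sequence
`δ₀ f` concentrated in degree `0`.
-/

open scoped BigOperators

noncomputable section

/-- The open interval `(0,1)` on which the functions of `G₀ = ℤ[t,t⁻¹,(1-t)⁻¹]` live. -/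
def I01 : Set ℝ := Set.Ioo 0 1

/-- Membership in `G₀ = ℤ[t,t⁻¹,(1-t)⁻¹]`, viewed as continuous functions on `(0,1)`:
`f ∈ G₀` iff `f(t) = p(t)/(tᵐ(1-t)ⁿ)` for some integer polynomial `p`. -/
def memG0 (f : I01 → ℝ) : Prop :=
  ∃ (p : Polynomial ℤ) (m n : ℕ),
    ∀ t : I01, f t = (Polynomial.aeval (t : ℝ) p) / ((t : ℝ) ^ m * (1 - (t : ℝ)) ^ n)

/-- The positive cone `G_F⁺ = {f ∈ G₀ : f > 0 on F} ∪ {0}`. -/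
def memGFp (F : Set ℝ) (f : I01 → ℝ) : Prop :=
  memG0 f ∧ ((∀ t : I01, (t : ℝ) ∈ F → 0 < f t) ∨ f = 0)

/-- Membership in `G = ⊕_{n ∈ ℤ} G₀` (finitely supported sequences of elements of `G₀`). -/
def memG (x : ℤ → I01 → ℝ) : Prop :=
  (∀ n : ℤ, memG0 (x n)) ∧ {n : ℤ | x n ≠ 0}.Finite

/-- `Σ_{n ∈ ℤ} αⁿ(xₙ)(t)`, where `α` is multiplication by `t/(1-t)`. -/
def sumAlpha (x : ℤ → I01 → ℝ) (t : I01) : ℝ :=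
  ∑ᶠ n : ℤ, ((t : ℝ) / (1 - (t : ℝ))) ^ n * x n t

/-- `Σ_{n ∈ ℤ} xₙ(t)`. -/
def sumPlain (x : ℤ → I01 → ℝ) (t : I01) : ℝ := ∑ᶠ n : ℤ, x n t

/-- The automorphism `γ₊ : G → G`, `γ₊((xₙ)ₙ) = (α(x_{n+1}))ₙ`. -/
def gammaStar (x : ℤ → I01 → ℝ) : ℤ → I01 → ℝ :=
  fun n t => ((t : ℝ) / (1 - (t : ℝ))) * x (n + 1) t

/-- The positive cone `G⁺` of `G` determined by `F` and `F₁`. -/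
def memGplus (F F1 : Set ℝ) (x : ℤ → I01 → ℝ) : Prop :=
  memG x ∧
    (((∀ t : I01, (t : ℝ) ∈ F → 0 < sumAlpha x t) ∧
      (∀ t : I01, (t : ℝ) ∈ F1 → 0 < sumPlain x t)) ∨ x = 0)

/-- The cone `G⁺⁺ = {0} ∪ {x ∈ G : Σₙ αⁿ(xₙ) > 0 on F}`. -/
def memGpp (F : Set ℝ) (x : ℤ → I01 → ℝ) : Prop :=
  memG x ∧ ((∀ t : I01, (t : ℝ) ∈ F → 0 < sumAlpha x t) ∨ x = 0)

/-- The sequence in `G` supported at `n = 0` with value `a`. -/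
def delta0 (a : I01 → ℝ) : ℤ → I01 → ℝ := fun n => if n = 0 then a else 0

def G0 : Subring (I01 → ℝ) where
  carrier := {f | memG0 f}
  zero_mem' := ⟨0, 0, 0, fun t => by simp⟩
  one_mem' := ⟨1, 0, 0, fun t => by simp⟩
  add_mem' := by
    rintro f g ⟨p, m, n, hf⟩ ⟨q, m', n', hg⟩
    refine ⟨p * .X ^ m' * (1 - .X) ^ n' + q * .X ^ m * (1 - .X) ^ n, m + m', n + n',
      fun t => ?_⟩
    have := t.2.1.ne'
    have : (1 : ℝ) - t ≠ 0 := sub_ne_zero.2 t.2.2.ne'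
    simp only [Pi.add_apply, hf t, hg t, map_add, map_mul, map_pow, map_sub, map_one,
      Polynomial.aeval_X]
    field_simp
    ring
  mul_mem' := by
    rintro f g ⟨p, m, n, hf⟩ ⟨q, m', n', hg⟩
    refine ⟨p * q, m + m', n + n', fun t => ?_⟩
    simp only [Pi.mul_apply, hf t, hg t, map_mul]
    ring
  neg_mem' := by
    rintro f ⟨p, m, n, hf⟩
    exact ⟨-p, m, n, fun t => by simp [hf t, neg_div]⟩

lemma zpow_alpha_mem_G0 (k : ℤ) : (fun t : I01 => ((t : ℝ) / (1 - t)) ^ k) ∈ G0 := by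
  obtain ⟨j, rfl | rfl⟩ := k.eq_nat_or_neg
  · refine ⟨.X ^ j, 0, j, fun t => ?_⟩
    simp [div_pow]
  · refine ⟨(1 - .X) ^ j, j, 0, fun t => ?_⟩
    simp [div_pow]

lemma sumAlpha_eq_sum {x : ℤ → I01 → ℝ} {s : Finset ℤ} (hs : ∀ n ∉ s, x n = 0) :
    sumAlpha x = ∑ n ∈ s, (fun t : I01 => ((t : ℝ) / (1 - t)) ^ n) * x n := by
  funext t
  rw [sumAlpha, Finset.sum_apply]
  refine finsum_eq_finsetSum_of_support_subset _ fun n hn => ?_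
  by_contra hns
  simp [hs n hns] at hn

lemma sumAlpha_mem_G0 {x : ℤ → I01 → ℝ} (hx : memG x) : sumAlpha x ∈ G0 := by
  obtain ⟨hmem, hfin⟩ := hx
  rw [sumAlpha_eq_sum (s := hfin.toFinset) fun n hn => by simpa using hn]
  exact sum_mem fun n _ => mul_mem (zpow_alpha_mem_G0 n) (hmem n)

lemma sumAlpha_zero : sumAlpha 0 = 0 := by
  simp [sumAlpha_eq_sum (s := ∅)]

lemma delta0_zero : delta0 0 = 0 := by
  funext n
  simp [delta0]

lemma memG_delta0 {f : I01 → ℝ} (hf : memG0 f) : memG (delta0 f) := by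
  refine ⟨fun n => ?_,
    (Set.finite_singleton 0).subset fun n hn => by_contra fun h => hn (if_neg h)⟩
  rw [delta0]
  split_ifs
  exacts [hf, G0.zero_mem]

lemma sumAlpha_delta0 (f : I01 → ℝ) : sumAlpha (delta0 f) = f := by
  rw [sumAlpha_eq_sum (s := {0}) fun n hn => by simp_all [delta0]]
  ext t
  simp [delta0]

theorem stmt16_general (F : Set ℝ) :
    (∀ x : ℤ → I01 → ℝ, memGpp F x → memGFp F (sumAlpha x)) ∧
    (∀ f : I01 → ℝ, memGFp F f → ∃ x : ℤ → I01 → ℝ, memGpp F x ∧ sumAlpha x = f) := by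
  refine ⟨?_, ?_⟩
  · rintro x ⟨hx, hpos⟩
    refine ⟨sumAlpha_mem_G0 hx, hpos.imp id ?_⟩
    rintro rfl
    exact sumAlpha_zero
  · rintro f ⟨hf, hpos⟩
    refine ⟨delta0 f, ⟨memG_delta0 hf, ?_⟩, sumAlpha_delta0 f⟩
    rw [sumAlpha_delta0]
    refine hpos.imp id ?_
    rintro rfl
    exact delta0_zero

/-- the isomorphism `S` (induced by `x ↦ Σₙ αⁿ(xₙ)`) maps the image of `G⁺⁺`
onto `G_F⁺ = {f ∈ G₀ : f > 0 on F} ∪ {0}`. -/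
theorem stmt16 (F : Set ℝ) (hFne : F.Nonempty) (hFc : IsClosed F)
    (hFsub : F ⊆ Set.Icc 0 1) (hF0 : (0:ℝ) ∉ F) (hF1 : (1:ℝ) ∉ F) :
    (∀ x : ℤ → I01 → ℝ, memGpp F x → memGFp F (sumAlpha x)) ∧
    (∀ f : I01 → ℝ, memGFp F f → ∃ x : ℤ → I01 → ℝ, memGpp F x ∧ sumAlpha x = f) :=
  stmt16_general F

end
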